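/- arXiv:1808.06031 — 2 statements merged into one kernel-verified Lean document; each statement's English description precedes it below -/
import Mathlib

section
/- Let n = s·p^k, where s > 1 is squarefree, p is a prime not dividing s, and k ≥ 1. Then the Erdős-Burgess constant of the multiplicative semigroup of ℤ/nℤ satisfies I_r(ℤ/nℤ) ≤ D((ℤ/nℤ)^×) + (k - 1) + (φ(s) - 1). -/
/-!
By the Chinese remainder theorem, `ZMod (s * p ^ k) ≃+* (Π q ∣ s, ZMod q) × ZMod (p ^ k)`.
In a product of fields, a product of elements is idempotent as soon as the product of their
unit parts (zero coordinates replaced by `1`) is `1`: each coordinate of the product is then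
`0` or `1`. In `ZMod (p ^ k)` every nonunit is divisible by `p`, so any `k` nonunits multiply
to `0`. Now take a sequence of length `D((ZMod n)ˣ) + (k - 1) + (D((ZMod s)ˣ) - 1)`. Either at
least `k + D((ZMod s)ˣ) - 1` terms have a nonunit `p`-component, and by repeatedly extracting
product-one subsequences of their unit parts in `(ZMod s)ˣ` we find one of length at least `k`;
or at least `D((ZMod n)ˣ)` terms have a unit `p`-component, and a product-one subsequence of
their unit parts in `(ZMod n)ˣ` does the job. Finally `D((ZMod s)ˣ) ≤ φ(s)`, by pigeonhole on
prefix products.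
-/

/-- The Davenport constant of a (multiplicative) commutative group: the least `k > 0` such
that every sequence of `k` elements has a nonempty subsequence with product `1`. -/
noncomputable def Davenport (G : Type*) [CommGroup G] : ℕ :=
  sInf {k : ℕ | 0 < k ∧ ∀ f : Fin k → G,
    ∃ T : Finset (Fin k), T.Nonempty ∧ ∏ i ∈ T, f i = 1}

/-- The Erdős–Burgess constant of a commutative monoid: the least `t > 0` such that every
sequence of `t` elements has a nonempty subsequence whose product is idempotent. -/
noncomputable def ErdosBurgess (M : Type*) [CommMonoid M] : ℕ :=
  sInf {t : ℕ | 0 < t ∧ ∀ f : Fin t → M,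
    ∃ T : Finset (Fin t), T.Nonempty ∧ (∏ i ∈ T, f i) * (∏ i ∈ T, f i) = ∏ i ∈ T, f i}

open Finset

section Davenport

variable {G H : Type*} [CommGroup G] [CommGroup H]

theorem exists_lt_le_prod_Ico_eq_one [Finite G] (f : ℕ → G) {m : ℕ}
    (hm : Nat.card G ≤ m) : ∃ a b, a < b ∧ b ≤ m ∧ ∏ i ∈ Ico a b, f i = 1 := by
  have := Fintype.ofFinite G
  rw [Nat.card_eq_fintype_card] at hm
  obtain ⟨a, b, hab, heq⟩ := Fintype.exists_ne_map_eq_of_card_lt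
    (fun j : Fin (m + 1) => ∏ i ∈ range j, f i) (by simpa using Nat.lt_succ_of_le hm)
  have key : ∀ a b : Fin (m + 1), (a : ℕ) < b →
      ∏ i ∈ range a, f i = ∏ i ∈ range b, f i → ∏ i ∈ Ico (a : ℕ) b, f i = 1 := by
    intro a b hlt h
    rwa [← prod_range_mul_prod_Ico f hlt.le, left_eq_mul] at h
  rcases Fin.lt_or_lt_of_ne hab with h | h
  · exact ⟨a, b, h, b.is_le, key a b h heq⟩
  · exact ⟨b, a, h, a.is_le, key b a h heq.symm⟩

theorem exists_nonempty_prod_eq_one_of_card_le [Finite G] {m : ℕ}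
    (hm : Nat.card G ≤ m) (f : Fin m → G) :
    ∃ T : Finset (Fin m), T.Nonempty ∧ ∏ i ∈ T, f i = 1 := by
  obtain ⟨a, b, hab, hbm, hprod⟩ :=
    exists_lt_le_prod_Ico_eq_one (fun i => if h : i < m then f ⟨i, h⟩ else 1) hm
  have hlt : ∀ i ∈ Ico a b, i < m := fun i hi => (mem_Ico.mp hi).2.trans_le hbm
  refine ⟨(Ico a b).attachFin hlt, ?_, ?_⟩
  · rw [← card_pos, card_attachFin, Nat.card_Ico]
    omega
  · rw [← hprod]
    conv_rhs => rw [← image_val_attachFin hlt, prod_image Fin.val_injective.injOn]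
    exact prod_congr rfl fun i _ => by simp

theorem davenport_mem [Finite G] : Davenport G ∈ {k : ℕ | 0 < k ∧ ∀ f : Fin k → G,
    ∃ T : Finset (Fin k), T.Nonempty ∧ ∏ i ∈ T, f i = 1} :=
  Nat.sInf_mem ⟨_, Nat.card_pos, fun f => exists_nonempty_prod_eq_one_of_card_le le_rfl f⟩

theorem davenport_pos [Finite G] : 0 < Davenport G := davenport_mem.1

theorem davenport_le_card [Finite G] : Davenport G ≤ Nat.card G :=
  Nat.sInf_le ⟨Nat.card_pos, fun f => exists_nonempty_prod_eq_one_of_card_le le_rfl f⟩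

theorem davenport_congr (e : G ≃* H) : Davenport G = Davenport H := by
  unfold Davenport
  congr! 4 with k
  refine (Equiv.arrowCongr (.refl _) e.toEquiv).forall_congr fun f => ?_
  simp [← map_prod]

theorem exists_subset_nonempty_prod_eq_one [Finite G] {ι : Type*} (u : ι → G) {S : Finset ι}
    (hS : Davenport G ≤ #S) : ∃ W ⊆ S, W.Nonempty ∧ ∏ i ∈ W, u i = 1 := by
  obtain ⟨S', hS'S, hS'⟩ := exists_subset_card_eq hS
  let e : Fin (Davenport G) ↪ ι :=
    (equivFinOfCardEq hS').symm.toEmbedding.trans (Function.Embedding.subtype _)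
  obtain ⟨T, hT, hprod⟩ := davenport_mem.2 (u ∘ e)
  refine ⟨T.map e, fun i hi => ?_, hT.map, by rwa [prod_map]⟩
  obtain ⟨j, -, rfl⟩ := mem_map.mp hi
  exact hS'S ((equivFinOfCardEq hS').symm j).2

theorem exists_subset_le_card_prod_eq_one [Finite G] {ι : Type*} [DecidableEq ι] (u : ι → G)
    {S : Finset ι} (k : ℕ) (hS : k + Davenport G - 1 ≤ #S) :
    ∃ W ⊆ S, k ≤ #W ∧ ∏ i ∈ W, u i = 1 := by
  induction k with
  | zero => exact ⟨∅, empty_subset S, le_rfl, prod_empty⟩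
  | succ k ih =>
    obtain ⟨W, hWS, hkW, hW⟩ := ih (by omega)
    by_cases hk : k + 1 ≤ #W
    · exact ⟨W, hWS, hk, hW⟩
    obtain ⟨W', hW'S, hW'ne, hW'⟩ := exists_subset_nonempty_prod_eq_one u (S := S \ W)
      (by rw [card_sdiff_of_subset hWS]; omega)
    have hdisj : Disjoint W W' :=
      disjoint_left.mpr fun i hi hi' => (mem_sdiff.mp (hW'S hi')).2 hi
    refine ⟨W ∪ W', union_subset hWS (hW'S.trans sdiff_subset), ?_, ?_⟩
    · rw [card_union_of_disjoint hdisj]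
      have := hW'ne.card_pos
      omega
    · rw [prod_union hdisj, hW, hW', mul_one]

end Davenport

section ErdosBurgess

variable {M N : Type*} [CommMonoid M] [CommMonoid N]

theorem erdosBurgess_le {t : ℕ} (ht : 0 < t)
    (h : ∀ f : Fin t → M, ∃ T : Finset (Fin t), T.Nonempty ∧ IsIdempotentElem (∏ i ∈ T, f i)) :
    ErdosBurgess M ≤ t :=
  Nat.sInf_le ⟨ht, h⟩

theorem erdosBurgess_congr (e : M ≃* N) : ErdosBurgess M = ErdosBurgess N := by
  unfold ErdosBurgess
  congr! 4 with k
  refine (Equiv.arrowCongr (.refl _) e.toEquiv).forall_congr fun f => ?_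
  simp [← map_prod, ← map_mul]

end ErdosBurgess

theorem Prod.isIdempotentElem_iff {M N : Type*} [Mul M] [Mul N] {x : M × N} :
    IsIdempotentElem x ↔ IsIdempotentElem x.1 ∧ IsIdempotentElem x.2 :=
  Prod.ext_iff

theorem Pi.isIdempotentElem_iff {ι : Type*} {M : ι → Type*} [∀ i, Mul (M i)] {x : ∀ i, M i} :
    IsIdempotentElem x ↔ ∀ i, IsIdempotentElem (x i) :=
  funext_iff

section UnitPart

variable {M : Type*} [Monoid M]

open Classical in
noncomputable def unitOrOne (x : M) : Mˣ := if h : IsUnit x then h.unit else 1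

theorem val_unitOrOne_of_isUnit {x : M} (h : IsUnit x) : (unitOrOne x : M) = x := by
  simp [unitOrOne, h]

end UnitPart

section PiUnitPart

variable {ι κ : Type*} {K : ι → Type*} [∀ i, CommGroupWithZero (K i)]

noncomputable def Pi.unitPart (a : ∀ i, K i) : (∀ i, K i)ˣ :=
  MulEquiv.piUnits.symm fun i => unitOrOne (a i)

@[simp]
theorem Pi.val_unitPart_apply (a : ∀ i, K i) (i : ι) :
    (Pi.unitPart a : ∀ i, K i) i = unitOrOne (a i) :=
  rfl

theorem Pi.isIdempotentElem_prod_of_prod_unitPart_eq_one {W : Finset κ} {a : κ → ∀ i, K i}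
    (h : ∏ j ∈ W, Pi.unitPart (a j) = 1) : IsIdempotentElem (∏ j ∈ W, a j) := by
  refine Pi.isIdempotentElem_iff.mpr fun i => ?_
  rw [Finset.prod_apply]
  by_cases hzero : ∃ j ∈ W, a j i = 0
  · obtain ⟨j, hj, hj0⟩ := hzero
    rw [Finset.prod_eq_zero hj hj0]
    exact .zero
  push Not at hzero
  have hi : ∏ j ∈ W, (unitOrOne (a j i) : K i) = 1 := by
    simpa [Units.coe_prod, Finset.prod_apply] using congr_fun (congrArg Units.val h) i
  rw [← Finset.prod_congr rfl fun j hj => val_unitOrOne_of_isUnit (hzero j hj).isUnit, hi]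
  exact .one

end PiUnitPart

theorem ZMod.prod_eq_zero_of_not_isUnit {p k : ℕ} (hp : p.Prime) {κ : Type*} {W : Finset κ}
    {x : κ → ZMod (p ^ k)} (hW : k ≤ W.card) (hx : ∀ j ∈ W, ¬ IsUnit (x j)) :
    ∏ j ∈ W, x j = 0 := by
  have : NeZero (p ^ k) := ⟨pow_ne_zero k hp.ne_zero⟩
  have hdvd : ∀ j ∈ W, (p : ZMod (p ^ k)) ∣ x j := by
    intro j hj
    have hpx : p ∣ (x j).val := by
      by_contra h
      refine hx j hj ?_
      rw [← ZMod.natCast_zmod_val (x j), ZMod.isUnit_iff_coprime]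
      exact ((hp.coprime_iff_not_dvd).mpr h).symm.pow_right k
    simpa using (Nat.cast_dvd_cast (α := ZMod (p ^ k)) hpx)
  have hpow : (p : ZMod (p ^ k)) ^ W.card ∣ ∏ j ∈ W, x j := by
    simpa using Finset.prod_dvd_prod_of_dvd _ _ hdvd
  rw [← zero_dvd_iff]
  calc (0 : ZMod (p ^ k)) = (p : ZMod (p ^ k)) ^ k := by rw [← Nat.cast_pow, ZMod.natCast_self]
  _ ∣ _ := (pow_dvd_pow _ hW).trans hpow

theorem erdosBurgess_pi_prod_zmod_le {ι : Type*} [Finite ι] {K : ι → Type*}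
    [∀ i, CommGroupWithZero (K i)] [∀ i, Finite (K i)] {p k : ℕ} (hp : p.Prime) (hk : 0 < k) :
    ErdosBurgess ((∀ i, K i) × ZMod (p ^ k)) ≤
      Davenport ((∀ i, K i) × ZMod (p ^ k))ˣ + (k - 1) + (Davenport (∀ i, K i)ˣ - 1) := by
  classical
  have : NeZero (p ^ k) := ⟨pow_ne_zero k hp.ne_zero⟩
  have hD := davenport_pos (G := ((∀ i, K i) × ZMod (p ^ k))ˣ)
  refine erdosBurgess_le (by omega) fun f => ?_
  have hcard := card_filter_add_card_filter_not (s := univ) fun j => IsUnit (f j).2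
  rw [card_univ, Fintype.card_fin] at hcard
  by_cases hP : k + Davenport (∀ i, K i)ˣ - 1 ≤ #{j | ¬ IsUnit (f j).2}
  · obtain ⟨W, hWP, hkW, hW⟩ :=
      exists_subset_le_card_prod_eq_one (fun j => Pi.unitPart (f j).1) k hP
    refine ⟨W, card_pos.mp (by omega), Prod.isIdempotentElem_iff.mpr ⟨?_, ?_⟩⟩
    · rw [Prod.fst_prod]
      exact Pi.isIdempotentElem_prod_of_prod_unitPart_eq_one hW
    · rw [Prod.snd_prod,
        ZMod.prod_eq_zero_of_not_isUnit hp hkW fun j hj => (mem_filter.mp (hWP hj)).2]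
      exact .zero
  have hU : Davenport ((∀ i, K i) × ZMod (p ^ k))ˣ ≤ #{j | IsUnit (f j).2} := by omega
  obtain ⟨W, hWU, hWne, hW⟩ := exists_subset_nonempty_prod_eq_one
    (fun j => MulEquiv.prodUnits.symm (Pi.unitPart (f j).1, unitOrOne (f j).2)) hU
  have hW' := congrArg MulEquiv.prodUnits hW
  simp only [map_prod, map_one, MulEquiv.apply_symm_apply] at hW'
  obtain ⟨hW₁, hW₂⟩ := Prod.ext_iff.mp hW'
  simp only [Prod.fst_prod, Prod.snd_prod, Prod.fst_one, Prod.snd_one] at hW₁ hW₂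
  refine ⟨W, hWne, Prod.isIdempotentElem_iff.mpr ⟨?_, ?_⟩⟩
  · rw [Prod.fst_prod]
    exact Pi.isIdempotentElem_prod_of_prod_unitPart_eq_one hW₁
  · have hunit j (hj : j ∈ W) := val_unitOrOne_of_isUnit (mem_filter.mp (hWU hj)).2
    rw [Prod.snd_prod, ← prod_congr rfl hunit, ← Units.coe_prod, hW₂, Units.val_one]
    exact .one

instance Nat.fact_prime_of_mem_primeFactors {s : ℕ} (q : s.primeFactors) : Fact (q : ℕ).Prime :=
  ⟨Nat.prime_of_mem_primeFactors q.2⟩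

noncomputable def ZMod.equivPiOfSquarefree {s : ℕ} (hs : Squarefree s) :
    ZMod s ≃+* ∀ q : s.primeFactors, ZMod q :=
  (ZMod.ringEquivCongr ((prod_coe_sort s.primeFactors id).trans
    (Nat.prod_primeFactors_of_squarefree hs)).symm).trans
    (ZMod.prodEquivPi (fun q : s.primeFactors => (q : ℕ)) fun q r hqr =>
      (Nat.coprime_primes (Nat.prime_of_mem_primeFactors q.2)
        (Nat.prime_of_mem_primeFactors r.2)).mpr (Subtype.coe_injective.ne hqr))

theorem stmt8_general (s p k : ℕ) (hsq : Squarefree s) (hp : p.Prime)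
    (hps : ¬ p ∣ s) (hk : 0 < k) :
    ErdosBurgess (ZMod (s * p ^ k)) ≤
      Davenport ((ZMod (s * p ^ k))ˣ) + (k - 1) + (Nat.totient s - 1) := by
  have : NeZero s := ⟨hsq.ne_zero⟩
  let e : ZMod (s * p ^ k) ≃+* (∀ q : s.primeFactors, ZMod q) × ZMod (p ^ k) :=
    (ZMod.chineseRemainder (((hp.coprime_iff_not_dvd).mpr hps).symm.pow_right k)).trans
      ((ZMod.equivPiOfSquarefree hsq).prodCongr (.refl _))
  rw [erdosBurgess_congr e.toMulEquiv, davenport_congr (Units.mapEquiv e.toMulEquiv)]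
  have hA : Davenport (∀ q : s.primeFactors, ZMod q)ˣ ≤ Nat.totient s := by
    calc _ ≤ Nat.card (∀ q : s.primeFactors, ZMod q)ˣ := davenport_le_card
    _ = Nat.card (ZMod s)ˣ :=
      Nat.card_congr (Units.mapEquiv (ZMod.equivPiOfSquarefree hsq).symm.toMulEquiv).toEquiv
    _ = Nat.totient s := by rw [Nat.card_eq_fintype_card, ZMod.card_units_eq_totient]
  calc _ ≤ _ := erdosBurgess_pi_prod_zmod_le hp hk
  _ ≤ _ := by gcongr

theorem stmt8 (s p k : ℕ) (hs : 1 < s) (hsq : Squarefree s) (hp : p.Prime)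
    (hps : ¬ p ∣ s) (hk : 0 < k) :
    ErdosBurgess (ZMod (s * p ^ k)) ≤
      Davenport ((ZMod (s * p ^ k))ˣ) + (k - 1) + (Nat.totient s - 1) :=
  stmt8_general s p k hsq hp hps hk
end

section
/- Let R be a UFD and a ∈ R a nonzero nonunit such that R/(a) is finite. Then I_r(R/(a)) ≥ D((R/(a))^×) + Ω(a) - ω(a), where Ω(a) is the number of prime factors of a counted with multiplicity and ω(a) the number of distinct prime factors (up to units). -/
open Finset
open scoped Nat

theorem isIdempotentElem_pow_factorial_card {M : Type*} [Monoid M] [Fintype M] (x : M) :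
    IsIdempotentElem (x ^ (Fintype.card M)!) := by
  set n := Fintype.card M
  obtain ⟨i, j, hij, hin, hpow⟩ : ∃ i j : ℕ, i < j ∧ i ≤ n ∧ x ^ i = x ^ j := by
    obtain ⟨i, j, hne, hpow⟩ :=
      Fintype.exists_ne_map_eq_of_card_lt (fun i : Fin (n + 1) ↦ x ^ (i : ℕ)) (by simp [n])
    rcases lt_or_gt_of_ne (Fin.val_ne_of_ne hne) with h | h
    · exact ⟨i, j, h, by omega, hpow⟩
    · exact ⟨j, i, h, by omega, hpow.symm⟩
  have hperiodic : Function.IsPeriodicPt (· * x) (j - i) (x ^ i) := by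
    rw [Function.IsPeriodicPt, Function.IsFixedPt, mul_right_iterate_apply, ← pow_add,
      Nat.add_sub_cancel' hij.le, hpow]
  have hfix : x ^ i * x ^ n ! = x ^ i := by
    simpa [Function.IsPeriodicPt, Function.IsFixedPt, mul_right_iterate_apply] using
      Function.isPeriodicPt_factorial_card_of_mem_periodicPts
        (Function.mk_mem_periodicPts (by omega) hperiodic)
  set N := n.factorial
  have hiN : i ≤ N := hin.trans (Nat.self_le_factorial n)
  calc x ^ N * x ^ N = x ^ (N - i) * (x ^ i * x ^ N) := by
        rw [← mul_assoc, ← pow_add x (N - i), Nat.sub_add_cancel hiN]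
    _ = x ^ N := by rw [hfix, ← pow_add, Nat.sub_add_cancel hiN]

theorem exists_isIdempotentElem_prod_of_card_mul_factorial {M : Type*} [CommMonoid M]
    [Fintype M] (f : Fin (Fintype.card M * (Fintype.card M)!) → M) :
    ∃ T : Finset _, T.Nonempty ∧ IsIdempotentElem (∏ i ∈ T, f i) := by
  classical
  obtain ⟨y, hy⟩ := Fintype.exists_le_card_fiber_of_mul_le_card f (n := (Fintype.card M)!)
    (by simp)
  obtain ⟨T, hTy, hT⟩ := exists_subset_card_eq hy
  refine ⟨T, card_pos.mp (by rw [hT]; exact Nat.factorial_pos _), ?_⟩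
  rw [prod_congr rfl fun i hi ↦ (mem_filter.mp (hTy hi)).2, prod_const, hT]
  exact isIdempotentElem_pow_factorial_card y

theorem card_lt_erdosBurgess {M ι : Type*} [CommMonoid M] [Finite M] [Fintype ι] (F : ι → M)
    (hF : ∀ T : Finset ι, T.Nonempty → ¬ IsIdempotentElem (∏ i ∈ T, F i)) :
    Fintype.card ι < ErdosBurgess M := by
  have := Fintype.ofFinite M
  -- the defining set is nonempty, so `sInf` is not the junk value `0`
  refine Nat.add_one_le_iff.mp <| le_csInf ⟨_, mul_pos Fintype.card_pos (Nat.factorial_pos _),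
    exists_isIdempotentElem_prod_of_card_mul_factorial⟩ fun t ht ↦ ?_
  by_contra! hle
  let e : Fin t ↪ ι := (Fin.castLEEmb (by omega)).trans (Fintype.equivFin ι).symm.toEmbedding
  obtain ⟨T, hT, hidem⟩ := ht.2 (F ∘ e)
  exact hF (T.map e) hT.map (by rwa [prod_map])

theorem exists_prod_ne_one_of_davenport_sub_one (G : Type*) [CommGroup G] :
    ∃ g : Fin (Davenport G - 1) → G,
      ∀ T : Finset (Fin (Davenport G - 1)), T.Nonempty → ∏ i ∈ T, g i ≠ 1 := by
  set k := Davenport G - 1 with hk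
  rcases k.eq_zero_or_pos with h0 | hpos
  · exact ⟨fun i ↦ absurd i.2 (by omega), fun T ⟨i, _⟩ ↦ absurd i.2 (by omega)⟩
  · have hnot := Nat.notMem_of_lt_sInf (s := {l : ℕ | 0 < l ∧ ∀ f : Fin l → G,
      ∃ T : Finset (Fin l), T.Nonempty ∧ ∏ i ∈ T, f i = 1}) (m := k) (by
        change k < Davenport G; omega)
    simp only [Set.mem_ofPred_eq, not_and, not_forall, not_exists] at hnot
    exact hnot hpos

theorem Prime.not_pow_count_succ_dvd_prod {α : Type*} [CommMonoidWithZero α]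
    [IsCancelMulZero α] [DecidableEq α] {p : α} (hp : Prime p) {s : Multiset α}
    (hs : ∀ q ∈ s, p ∣ q → q = p) :
    ¬ p ^ (s.count p + 1) ∣ s.prod := by
  rw [← Multiset.prod_filter_mul_prod_filter_not (· = p), Multiset.filter_eq',
    Multiset.prod_replicate, pow_succ, mul_dvd_mul_iff_left (pow_ne_zero _ hp.ne_zero)]
  intro hdvd
  obtain ⟨q, hq, hpq⟩ := hp.exists_mem_multiset_dvd hdvd
  rw [Multiset.mem_filter] at hq
  exact hq.2 (hs q hq.1 hpq)

theorem Ideal.Quotient.exists_dvd_mul_mul_sub_one_of_isIdempotentElem {R : Type*} [CommRing R]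
    {a c : R} (u : (R ⧸ Ideal.span {a})ˣ)
    (h : IsIdempotentElem (Ideal.Quotient.mk (Ideal.span {a}) c * u)) :
    ∃ w, a ∣ c * (c * w - 1) := by
  obtain ⟨w, hw⟩ := Ideal.Quotient.mk_surjective (u : R ⧸ Ideal.span {a})
  refine ⟨w, ?_⟩
  rw [← Ideal.mem_span_singleton, ← Ideal.Quotient.eq_zero_iff_mem, map_mul, map_sub, map_mul,
    map_one, hw]
  set x := Ideal.Quotient.mk (Ideal.span {a}) c
  linear_combination (↑u⁻¹ : R ⧸ Ideal.span {a}) * h.eq - (x * x * u - x) * u.mul_inv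

theorem Multiset.map_val_coe_le {α : Type*} [DecidableEq α] {m : Multiset α} (T : Finset m) :
    T.val.map (fun x : m ↦ (x : α)) ≤ m :=
  (Multiset.map_le_map (val_le_iff.mpr (subset_univ T))).trans_eq (Multiset.map_univ_coe m)

section RepeatedPrimeFactors

variable {R : Type*} [CommRing R] [IsDomain R] [DecidableEq R] {a : R} {f : Multiset R}

theorem not_isIdempotentElem_mk_prod_mul_unit (hf : ∀ b ∈ f, Prime b) (hfa : f.prod ∣ a)
    (hdist : ∀ b ∈ f, ∀ c ∈ f, Associated b c → b = c) {s : Multiset R}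
    (hsf : s ≤ f - f.dedup) (hs : s ≠ 0) (u : (R ⧸ Ideal.span {a})ˣ) :
    ¬ IsIdempotentElem (Ideal.Quotient.mk (Ideal.span {a}) s.prod * u) := by
  intro hidem
  obtain ⟨p, hps⟩ := Multiset.exists_mem_of_ne_zero hs
  have hsf' : s ≤ f := hsf.trans (Multiset.sub_le_self _ _)
  have hpf : p ∈ f := Multiset.mem_of_le hsf' hps
  have hp : Prime p := hf p hpf
  have hcount : s.count p + 1 ≤ f.count p := by
    have := Multiset.count_le_of_le p hsf
    rw [Multiset.count_sub, Multiset.count_dedup, if_pos hpf] at this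
    have := Multiset.count_pos.mpr hpf
    omega
  have hpa : p ^ f.count p ∣ a := by
    rw [← Multiset.prod_replicate, ← Multiset.filter_eq']
    exact (Multiset.prod_dvd_prod_of_le (Multiset.filter_le _ _)).trans hfa
  obtain ⟨w, hw⟩ := Ideal.Quotient.exists_dvd_mul_mul_sub_one_of_isIdempotentElem u hidem
  have hpc : p ∣ s.prod := Multiset.dvd_prod hps
  have hpcw : ¬ p ∣ s.prod * w - 1 := fun h ↦
    hp.not_isUnit (isUnit_of_dvd_one ((dvd_sub_right (hpc.mul_right w)).mp h))
  refine hp.not_pow_count_succ_dvd_prod (fun q hq hpq ↦ ?_)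
    ((pow_dvd_pow p hcount).trans (hp.pow_dvd_of_dvd_mul_right _ hpcw (hpa.trans hw)))
  have hqf := Multiset.mem_of_le hsf' hq
  exact (hdist p hpf q hqf (hp.associated_of_dvd (hf q hqf) hpq)).symm

theorem not_isIdempotentElem_prod_sumElim (hf : ∀ b ∈ f, Prime b) (hfa : f.prod ∣ a)
    (hdist : ∀ b ∈ f, ∀ c ∈ f, Associated b c → b = c) {ι : Type*}
    {g : ι → (R ⧸ Ideal.span {a})ˣ}
    (hg : ∀ T : Finset ι, T.Nonempty → ∏ j ∈ T, g j ≠ 1)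
    {m : Multiset R} (hm : m ≤ f - f.dedup) {T : Finset (m ⊕ ι)} (hT : T.Nonempty) :
    ¬ IsIdempotentElem (∏ i ∈ T, Sum.elim (fun x : m ↦ Ideal.Quotient.mk _ (x : R))
      (fun j ↦ (g j : R ⧸ Ideal.span {a})) i) := by
  have hprod : ∏ i ∈ T, Sum.elim (fun x : m ↦ Ideal.Quotient.mk _ (x : R))
      (fun j ↦ (g j : R ⧸ Ideal.span {a})) i =
      Ideal.Quotient.mk (Ideal.span {a}) (T.toLeft.val.map (fun x : m ↦ (x : R))).prod *
        ↑(∏ j ∈ T.toRight, g j) := by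
    conv_lhs => rw [← toLeft_disjSum_toRight (u := T)]
    rw [prod_sumElim, Units.coe_prod, map_multiset_prod, Multiset.map_map]
    rfl
  rw [hprod]
  rcases T.toLeft.eq_empty_or_nonempty with hleft | hleft
  · rw [hleft, empty_val, Multiset.map_zero, Multiset.prod_zero, map_one, one_mul,
      IsIdempotentElem.iff_eq_one_of_isUnit (Units.isUnit _), Units.val_eq_one]
    rw [← toLeft_disjSum_toRight (u := T), hleft] at hT
    exact hg _ (by simpa using hT)
  · exact not_isIdempotentElem_mk_prod_mul_unit hf hfa hdist
      ((Multiset.map_val_coe_le _).trans hm) (by simpa using hleft.ne_empty) _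

end RepeatedPrimeFactors

theorem stmt16_general {R : Type*} [CommRing R] [IsDomain R]
    [DecidableEq R] (a : R)
    [Finite (R ⧸ Ideal.span {a})] (f : Multiset R) (hf : ∀ b ∈ f, Prime b)
    (hassoc : Associated f.prod a)
    (hdist : ∀ b ∈ f, ∀ c ∈ f, Associated b c → b = c) :
    Davenport ((R ⧸ Ideal.span {a})ˣ) + Multiset.card f - f.toFinset.card ≤
      ErdosBurgess (R ⧸ Ideal.span {a}) := by
  obtain ⟨g, hg⟩ := exists_prod_ne_one_of_davenport_sub_one (R ⧸ Ideal.span {a})ˣ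
  have hlt := card_lt_erdosBurgess _ fun _ ↦
    not_isIdempotentElem_prod_sumElim hf hassoc.dvd hdist hg le_rfl
  rw [Fintype.card_sum, Multiset.card_coe, Fintype.card_fin,
    Multiset.card_sub (Multiset.dedup_le f)] at hlt
  have : f.toFinset.card = Multiset.card f.dedup := rfl
  omega

theorem stmt16 {R : Type*} [CommRing R] [IsDomain R] [UniqueFactorizationMonoid R]
    [DecidableEq R] (a : R) (ha : a ≠ 0) (hu : ¬ IsUnit a)
    [Finite (R ⧸ Ideal.span {a})] (f : Multiset R) (hf : ∀ b ∈ f, Prime b)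
    (hassoc : Associated f.prod a)
    (hdist : ∀ b ∈ f, ∀ c ∈ f, Associated b c → b = c) :
    Davenport ((R ⧸ Ideal.span {a})ˣ) + Multiset.card f - f.toFinset.card ≤
      ErdosBurgess (R ⧸ Ideal.span {a}) :=
  stmt16_general a f hf hassoc hdist
end
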